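/- Fix a ∈ 𝒜 with P(Y⁰=0, A=a) > 0 and P(Y⁰=0, S=1) > 0, and assume: consistency (P-almost surely, if D = 0 then Y = Y⁰); ignorability (for all a' ∈ 𝒜, x ∈ 𝒳, and s, y, d ∈ {0,1} with P(A=a', X=x, S=s) > 0, P(Y⁰=y, D=d | A=a', X=x, S=s) = P(Y⁰=y | A=a', X=x, S=s) · P(D=d | A=a', X=x, S=s)); positivity (P(D=0, A=a', X=x, S=s) > 0 whenever P(A=a', X=x, S=s) > 0); Y⁰ is conditionally independent of (A, D) given (X, S) (for all y, d, a', x, s with P(X=x, S=s) > 0, P(Y⁰=y, A=a', D=d | X=x, S=s) = P(Y⁰=y | X=x, S=s) · P(A=a', D=d | X=x, S=s)); Y⁰ is conditionally independent of (A, D) given X (for all y, d, a', x with P(X=x) > 0, P(Y⁰=y, A=a', D=d | X=x) = P(Y⁰=y | X=x) · P(A=a', D=d | X=x)); positivity given (X,S) (P(D=0, S=s, X=x) > 0 whenever P(S=s, X=x) > 0); and positivity given X (P(D=0, X=x) > 0 whenever P(X=x) > 0). Then the group-specific counterfactual false positive rate is fully identified from the observed data as: P(S=1 | Y⁰=0,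 A=a) = ( E[1{D=0}·1{S=1}·1{Y=0}/(1−π(A,X,S))] / E[1{D=0}·1{Y=0}/(1−π(A,X,S))] ) · ( E[μ₀(0,1,X)·1{A=a}·1{S=1}] / E[μ₀(0,1,X)·1{S=1}] ) / ( E[μ₀*(0,X)·h(X,a)] / E[μ₀*(0,X)] ). -/

import Mathlib

/-!
By Bayes' rule, `P(S=1 | Y⁰=0, A=a) = P(S=1 | Y⁰=0) · P(A=a | Y⁰=0, S=1) / P(A=a | Y⁰=0)`, and
each of the three factors is the corresponding ratio of observable series. On a stratum `C`,
consistency replaces `Y` by `Y⁰` on `{D=0}`, and conditional independence of `Y⁰` and the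
treatment given `C` (plus positivity) gives `P(Y=0 | D=0, C) = P(Y⁰=0 | C)` and
`P(D=0, Y=0, C) / P(D=0 | C) = P(Y⁰=0, C)`. Hence every inverse-propensity and every
outcome-regression term is `P(Y⁰=0, ·)` of its cell of the countable partition by `(A, X, S)`
or by `X`, and summing over the cells yields the marginals. Null cells contribute zero on both
sides because `x / 0 = 0`.
-/

open MeasureTheory

/-- `pr P E` is the probability of the event `E` as a real number. -/
noncomputable def pr {Ω : Type*} [MeasurableSpace Ω] (P : Measure Ω) (E : Set Ω) : ℝ :=
  (P E).toReal

/-- `cpr P E F = P(E | F) = P(E ∩ F) / P(F)`, the conditional probability of `E` given `F`. -/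
noncomputable def cpr {Ω : Type*} [MeasurableSpace Ω] (P : Measure Ω) (E F : Set Ω) : ℝ :=
  pr P (E ∩ F) / pr P F

section
variable {Ω β : Type*} [MeasurableSpace Ω] {P : Measure Ω} {E F C : Set Ω}

lemma pr_nonneg (E : Set Ω) : 0 ≤ pr P E := ENNReal.toReal_nonneg

lemma pr_mono [IsFiniteMeasure P] (h : E ⊆ F) : pr P E ≤ pr P F :=
  ENNReal.toReal_mono (measure_ne_top P F) (measure_mono h)

lemma pr_eq_zero_of_subset [IsFiniteMeasure P] (h : E ⊆ F) (hF : pr P F = 0) : pr P E = 0 :=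
  le_antisymm (hF ▸ pr_mono h) (pr_nonneg E)

lemma pr_inter_congr_of_ae (h : ∀ᵐ ω ∂P, ω ∈ C → (ω ∈ E ↔ ω ∈ F)) :
    pr P (E ∩ C) = pr P (F ∩ C) := by
  unfold pr
  congr 1
  refine measure_congr (Filter.eventuallyEq_set.2 ?_)
  filter_upwards [h] with ω hω
  simp only [Set.mem_inter_iff]
  tauto

lemma tsum_pr_inter_fiber [IsFiniteMeasure P] [MeasurableSpace β] [MeasurableSingletonClass β]
    [Countable β] {f : Ω → β} (hf : Measurable f) (E : Set Ω) :
    ∑' b, pr P (E ∩ f ⁻¹' {b}) = pr P E := by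
  have hfib (b : β) : P (E ∩ f ⁻¹' {b}) = P.restrict E (f ⁻¹' {b}) := by
    rw [Measure.restrict_apply (hf (measurableSet_singleton b)), Set.inter_comm]
  unfold pr
  rw [← ENNReal.tsum_toReal_eq fun b => measure_ne_top P _]
  simp_rw [hfib]
  rw [← measure_iUnion (fun b c hbc => Set.disjoint_singleton.2 hbc |>.preimage f)
    fun b => hf (measurableSet_singleton b)]
  rw [← Set.preimage_iUnion, Set.iUnion_of_singleton, Set.preimage_univ,
    Measure.restrict_apply_univ]

lemma cpr_mul_pr [IsFiniteMeasure P] (E C : Set Ω) : cpr P E C * pr P C = pr P (E ∩ C) := by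
  rcases eq_or_ne (pr P C) 0 with hC | hC
  · rw [hC, mul_zero, pr_eq_zero_of_subset Set.inter_subset_right hC]
  · exact div_mul_cancel₀ _ hC

lemma cpr_eq_zero_of_pr_eq_zero (hC : pr P C = 0) (E : Set Ω) : cpr P E C = 0 := by
  rw [cpr, hC, div_zero]

lemma tsum_cpr_inter_fiber [IsFiniteMeasure P] [MeasurableSpace β] [MeasurableSingletonClass β]
    [Countable β] {f : Ω → β} (hf : Measurable f) (E C : Set Ω) :
    ∑' b, cpr P (E ∩ f ⁻¹' {b}) C = cpr P E C := by
  simp only [cpr, tsum_div_const, Set.inter_right_comm _ (f ⁻¹' _), tsum_pr_inter_fiber hf]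

lemma one_sub_cpr_compl [IsFiniteMeasure P] {T : Set Ω} (hT : MeasurableSet T)
    (hC : pr P C ≠ 0) : 1 - cpr P Tᶜ C = cpr P T C := by
  have hsplit : pr P (T ∩ C) + pr P (Tᶜ ∩ C) = pr P C := by
    unfold pr
    rw [← ENNReal.toReal_add (measure_ne_top P _) (measure_ne_top P _),
      Set.inter_comm T, Set.inter_comm Tᶜ, ← Set.sdiff_eq, measure_inter_add_sdiff C hT]
  rw [cpr, cpr, eq_div_iff hC, sub_mul, div_mul_cancel₀ _ hC]
  linarith

lemma cpr_mul_cpr_div_cpr [IsFiniteMeasure P] (E F G : Set Ω) :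
    cpr P F E * cpr P G (E ∩ F) / cpr P G E = cpr P F (E ∩ G) := by
  have hEFG : G ∩ (E ∩ F) = F ∩ (E ∩ G) := by
    rw [Set.inter_left_comm, Set.inter_comm G, Set.inter_left_comm]
  simp only [cpr, Set.inter_comm F E, Set.inter_comm G E, hEFG]
  rcases eq_or_ne (pr P E) 0 with hE | hE
  · rw [pr_eq_zero_of_subset (Set.inter_subset_left : E ∩ G ⊆ E) hE]; simp
  rcases eq_or_ne (pr P (E ∩ F)) 0 with hF | hF
  · rw [pr_eq_zero_of_subset (fun ω h => ⟨h.2.1, h.1⟩ : F ∩ (E ∩ G) ⊆ E ∩ F) hF]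
    simp
  rcases eq_or_ne (pr P (E ∩ G)) 0 with hG | hG
  · rw [hG]; simp
  field_simp

def CondIndepOn (P : Measure Ω) (E F C : Set Ω) : Prop :=
  cpr P (E ∩ F) C = cpr P E C * cpr P F C

namespace CondIndepOn

lemma of_pos (h : 0 < pr P C → CondIndepOn P E F C) : CondIndepOn P E F C := by
  rcases (pr_nonneg C).lt_or_eq with hC | hC
  · exact h hC
  · simp only [CondIndepOn, cpr_eq_zero_of_pr_eq_zero hC.symm, mul_zero]

lemma of_fibers [IsFiniteMeasure P] [MeasurableSpace β] [MeasurableSingletonClass β]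
    [Countable β] {f : Ω → β} (hf : Measurable f)
    (h : ∀ b, CondIndepOn P E (F ∩ f ⁻¹' {b}) C) : CondIndepOn P E F C := by
  unfold CondIndepOn at *
  rw [← tsum_cpr_inter_fiber hf (E ∩ F), ← tsum_cpr_inter_fiber hf F, ← tsum_mul_left]
  simp only [Set.inter_assoc, h]

lemma pr_inter_mul_pr [IsFiniteMeasure P] (h : CondIndepOn P E F C) :
    pr P (E ∩ F ∩ C) * pr P C = pr P (E ∩ C) * pr P (F ∩ C) := by
  rcases eq_or_ne (pr P C) 0 with hC | hC
  · rw [hC, mul_zero, pr_eq_zero_of_subset (Set.inter_subset_right : E ∩ C ⊆ C) hC, zero_mul]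
  · unfold CondIndepOn cpr at h
    field_simp at h
    linear_combination h

lemma cpr_inter_right [IsFiniteMeasure P] (h : CondIndepOn P E F C) (hF : 0 < pr P (F ∩ C)) :
    cpr P E (F ∩ C) = cpr P E C := by
  have hC : 0 < pr P C := hF.trans_le (pr_mono Set.inter_subset_right)
  rw [cpr, cpr, div_eq_div_iff hF.ne' hC.ne', ← Set.inter_assoc, h.pr_inter_mul_pr]

lemma pr_inter_div_cpr [IsFiniteMeasure P] (h : CondIndepOn P E F C) (hF : 0 < pr P (F ∩ C)) :
    pr P (E ∩ (F ∩ C)) / cpr P F C = pr P (E ∩ C) := by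
  rw [cpr, div_div_eq_mul_div, div_eq_iff hF.ne', ← Set.inter_assoc, h.pr_inter_mul_pr]

lemma cpr_mul_pr_inter [IsFiniteMeasure P] (h : CondIndepOn P E F C) :
    cpr P E C * pr P (F ∩ C) = pr P (E ∩ F ∩ C) := by
  rcases eq_or_ne (pr P C) 0 with hC | hC
  · rw [cpr_eq_zero_of_pr_eq_zero hC, zero_mul,
      pr_eq_zero_of_subset Set.inter_subset_right hC]
  · rw [cpr, div_mul_eq_mul_div, div_eq_iff hC, h.pr_inter_mul_pr]

end CondIndepOn
end

section
variable {Ω β γ δ : Type*} [MeasurableSpace Ω] {P : Measure Ω} [IsFiniteMeasure P]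
  [MeasurableSpace β] [MeasurableSingletonClass β] [Countable β]
  [MeasurableSpace γ] [MeasurableSingletonClass γ] [Countable γ]
  [MeasurableSpace δ] [MeasurableSingletonClass δ] [Countable δ]
  {f : Ω → β} {g : Ω → γ} {h : Ω → δ}

lemma tsum_pr_inter_inter_fiber (hf : Measurable f) (E B : Set Ω) :
    ∑' b, pr P (E ∩ (B ∩ f ⁻¹' {b})) = pr P (E ∩ B) := by
  simp only [← Set.inter_assoc, tsum_pr_inter_fiber hf]

lemma tsum_tsum_tsum_pr_inter_fiber (hf : Measurable f) (hg : Measurable g) (hh : Measurable h)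
    (E : Set Ω) :
    ∑' b, ∑' c, ∑' d, pr P (E ∩ (f ⁻¹' {b} ∩ (g ⁻¹' {c} ∩ h ⁻¹' {d}))) = pr P E := by
  simp only [← Set.inter_assoc, tsum_pr_inter_fiber hh, tsum_pr_inter_fiber hg,
    tsum_pr_inter_fiber hf]

end

section
variable {Ω 𝒜 𝒳 : Type*} [MeasurableSpace Ω] {P : Measure Ω} {Y0 Y D S : Ω → Bool}
  {A : Ω → 𝒜} {X : Ω → 𝒳} {C : Set Ω}

lemma pr_outcome_inter_untreated (hcons : ∀ᵐ ω ∂P, D ω = false → Y ω = Y0 ω) (C : Set Ω) :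
    pr P ({ω | Y ω = false} ∩ ({ω | D ω = false} ∩ C)) =
      pr P ({ω | Y0 ω = false} ∩ ({ω | D ω = false} ∩ C)) :=
  pr_inter_congr_of_ae (hcons.mono fun ω h hω => by
    show Y ω = false ↔ Y0 ω = false
    rw [h hω.1])

variable [IsFiniteMeasure P]

lemma pr_untreated_div_one_sub_propensity (hD : Measurable D)
    (hcons : ∀ᵐ ω ∂P, D ω = false → Y ω = Y0 ω)
    (hig : 0 < pr P C → CondIndepOn P {ω | Y0 ω = false} {ω | D ω = false} C)
    (hpos : 0 < pr P C → 0 < pr P ({ω | D ω = false} ∩ C)) :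
    pr P ({ω | D ω = false} ∩ ({ω | Y ω = false} ∩ C)) / (1 - cpr P {ω | D ω = true} C) =
      pr P ({ω | Y0 ω = false} ∩ C) := by
  rcases (pr_nonneg C).lt_or_eq with hC | hC
  · have hcompl : {ω | D ω = true} = {ω | D ω = false}ᶜ := by ext; simp
    rw [hcompl, one_sub_cpr_compl (T := {ω | D ω = false}) (hD (measurableSet_singleton false))
      hC.ne', Set.inter_left_comm, pr_outcome_inter_untreated hcons,
      (hig hC).pr_inter_div_cpr (hpos hC)]
  · rw [pr_eq_zero_of_subset (Set.inter_subset_right.trans Set.inter_subset_right) hC.symm,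
      pr_eq_zero_of_subset Set.inter_subset_right hC.symm, zero_div]

lemma condIndepOn_group (hD : Measurable D)
    (hCI : 0 < pr P C → ∀ a' d,
      CondIndepOn P {ω | Y0 ω = false} ({ω | A ω = a'} ∩ {ω | D ω = d}) C) (a : 𝒜) :
    CondIndepOn P {ω | Y0 ω = false} {ω | A ω = a} C :=
  CondIndepOn.of_fibers hD fun d => CondIndepOn.of_pos fun hC => hCI hC a d

lemma ipw_summand_eq (hD : Measurable D) (hcons : ∀ᵐ ω ∂P, D ω = false → Y ω = Y0 ω)
    (hig : ∀ a' x s, 0 < pr P {ω | A ω = a' ∧ X ω = x ∧ S ω = s} →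
      CondIndepOn P {ω | Y0 ω = false} {ω | D ω = false} {ω | A ω = a' ∧ X ω = x ∧ S ω = s})
    (hposD : ∀ a' x s, 0 < pr P {ω | A ω = a' ∧ X ω = x ∧ S ω = s} →
      0 < pr P {ω | D ω = false ∧ A ω = a' ∧ X ω = x ∧ S ω = s}) (a' : 𝒜) (x : 𝒳) (s : Bool) :
    pr P {ω | D ω = false ∧ Y ω = false ∧ A ω = a' ∧ X ω = x ∧ S ω = s} /
        (1 - cpr P {ω | D ω = true} {ω | A ω = a' ∧ X ω = x ∧ S ω = s}) =
      pr P ({ω | Y0 ω = false} ∩ (A ⁻¹' {a'} ∩ (X ⁻¹' {x} ∩ S ⁻¹' {s}))) :=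
  pr_untreated_div_one_sub_propensity hD hcons (hig a' x s) (hposD a' x s)

lemma ipw_summand_predicted_pos_eq (hD : Measurable D)
    (hcons : ∀ᵐ ω ∂P, D ω = false → Y ω = Y0 ω)
    (hig : ∀ a' x s, 0 < pr P {ω | A ω = a' ∧ X ω = x ∧ S ω = s} →
      CondIndepOn P {ω | Y0 ω = false} {ω | D ω = false} {ω | A ω = a' ∧ X ω = x ∧ S ω = s})
    (hposD : ∀ a' x s, 0 < pr P {ω | A ω = a' ∧ X ω = x ∧ S ω = s} →
      0 < pr P {ω | D ω = false ∧ A ω = a' ∧ X ω = x ∧ S ω = s}) (a' : 𝒜) (x : 𝒳) (s : Bool) :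
    pr P {ω | D ω = false ∧ S ω = true ∧ Y ω = false ∧ A ω = a' ∧ X ω = x ∧ S ω = s} /
        (1 - cpr P {ω | D ω = true} {ω | A ω = a' ∧ X ω = x ∧ S ω = s}) =
      pr P ({ω | Y0 ω = false} ∩ {ω | S ω = true} ∩ (A ⁻¹' {a'} ∩ (X ⁻¹' {x} ∩ S ⁻¹' {s}))) := by
  cases s
  · have hempty : pr P (∅ : Set Ω) = 0 := by simp [pr]
    rw [pr_eq_zero_of_subset (fun ω hω => by
        obtain ⟨-, h, -, -, -, h'⟩ := hω; simp [h] at h') hempty, zero_div,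
      pr_eq_zero_of_subset (fun ω hω => by
        obtain ⟨⟨-, h : S ω = true⟩, -, -, h'⟩ := hω; simp [h] at h') hempty]
  · have hS : {ω | D ω = false ∧ S ω = true ∧ Y ω = false ∧ A ω = a' ∧ X ω = x ∧ S ω = true} =
        {ω | D ω = false ∧ Y ω = false ∧ A ω = a' ∧ X ω = x ∧ S ω = true} := by ext; simp
    rw [hS, ipw_summand_eq hD hcons hig hposD]
    congr 1; ext; simp; tauto

variable [MeasurableSpace 𝒜] [MeasurableSingletonClass 𝒜] [Countable 𝒜]

lemma cpr_outcome_untreated (hA : Measurable A) (hcons : ∀ᵐ ω ∂P, D ω = false → Y ω = Y0 ω)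
    (hCI : ∀ a' d, CondIndepOn P {ω | Y0 ω = false} ({ω | A ω = a'} ∩ {ω | D ω = d}) C)
    (hpos : 0 < pr P ({ω | D ω = false} ∩ C)) :
    cpr P {ω | Y ω = false} ({ω | D ω = false} ∩ C) = cpr P {ω | Y0 ω = false} C := by
  have hindD : CondIndepOn P {ω | Y0 ω = false} {ω | D ω = false} C :=
    CondIndepOn.of_fibers hA fun a' => by rw [Set.inter_comm]; exact hCI a' false
  rw [cpr, pr_outcome_inter_untreated hcons, ← cpr, hindD.cpr_inter_right hpos]

lemma cpr_outcome_untreated_mul_pr_of_subset (hA : Measurable A)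
    (hcons : ∀ᵐ ω ∂P, D ω = false → Y ω = Y0 ω)
    (hCI : 0 < pr P C → ∀ a' d,
      CondIndepOn P {ω | Y0 ω = false} ({ω | A ω = a'} ∩ {ω | D ω = d}) C)
    (hpos : 0 < pr P C → 0 < pr P ({ω | D ω = false} ∩ C)) {G : Set Ω} (hG : G ⊆ C) :
    cpr P {ω | Y ω = false} ({ω | D ω = false} ∩ C) * pr P G =
      cpr P {ω | Y0 ω = false} C * pr P G := by
  rcases (pr_nonneg C).lt_or_eq with hC | hC
  · rw [cpr_outcome_untreated hA hcons (hCI hC) (hpos hC)]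
  · rw [pr_eq_zero_of_subset hG hC.symm, mul_zero, mul_zero]

lemma cpr_outcome_untreated_mul_pr_group (hA : Measurable A) (hD : Measurable D)
    (hcons : ∀ᵐ ω ∂P, D ω = false → Y ω = Y0 ω)
    (hCI : 0 < pr P C → ∀ a' d,
      CondIndepOn P {ω | Y0 ω = false} ({ω | A ω = a'} ∩ {ω | D ω = d}) C)
    (hpos : 0 < pr P C → 0 < pr P ({ω | D ω = false} ∩ C)) (a : 𝒜) :
    cpr P {ω | Y ω = false} ({ω | D ω = false} ∩ C) * pr P ({ω | A ω = a} ∩ C) =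
      pr P ({ω | Y0 ω = false} ∩ {ω | A ω = a} ∩ C) :=
  (cpr_outcome_untreated_mul_pr_of_subset hA hcons hCI hpos Set.inter_subset_right).trans
    (condIndepOn_group hD hCI a).cpr_mul_pr_inter

lemma cpr_outcome_untreated_mul_pr (hA : Measurable A)
    (hcons : ∀ᵐ ω ∂P, D ω = false → Y ω = Y0 ω)
    (hCI : 0 < pr P C → ∀ a' d,
      CondIndepOn P {ω | Y0 ω = false} ({ω | A ω = a'} ∩ {ω | D ω = d}) C)
    (hpos : 0 < pr P C → 0 < pr P ({ω | D ω = false} ∩ C)) :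
    cpr P {ω | Y ω = false} ({ω | D ω = false} ∩ C) * pr P C =
      pr P ({ω | Y0 ω = false} ∩ C) :=
  (cpr_outcome_untreated_mul_pr_of_subset hA hcons hCI hpos subset_rfl).trans (cpr_mul_pr _ _)

variable [MeasurableSpace 𝒳] [MeasurableSingletonClass 𝒳] [Countable 𝒳]

lemma ipw_ratio_eq (hA : Measurable A) (hX : Measurable X) (hS : Measurable S)
    (hD : Measurable D) (hcons : ∀ᵐ ω ∂P, D ω = false → Y ω = Y0 ω)
    (hig : ∀ a' x s, 0 < pr P {ω | A ω = a' ∧ X ω = x ∧ S ω = s} →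
      CondIndepOn P {ω | Y0 ω = false} {ω | D ω = false} {ω | A ω = a' ∧ X ω = x ∧ S ω = s})
    (hposD : ∀ a' x s, 0 < pr P {ω | A ω = a' ∧ X ω = x ∧ S ω = s} →
      0 < pr P {ω | D ω = false ∧ A ω = a' ∧ X ω = x ∧ S ω = s}) :
    (∑' (a' : 𝒜) (x : 𝒳) (s : Bool),
        pr P {ω | D ω = false ∧ S ω = true ∧ Y ω = false ∧ A ω = a' ∧ X ω = x ∧ S ω = s} /
          (1 - cpr P {ω | D ω = true} {ω | A ω = a' ∧ X ω = x ∧ S ω = s})) /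
      (∑' (a' : 𝒜) (x : 𝒳) (s : Bool),
        pr P {ω | D ω = false ∧ Y ω = false ∧ A ω = a' ∧ X ω = x ∧ S ω = s} /
          (1 - cpr P {ω | D ω = true} {ω | A ω = a' ∧ X ω = x ∧ S ω = s})) =
      cpr P {ω | S ω = true} {ω | Y0 ω = false} := by
  simp only [ipw_summand_predicted_pos_eq hD hcons hig hposD, ipw_summand_eq hD hcons hig hposD,
    tsum_tsum_tsum_pr_inter_fiber hA hX hS]
  rw [cpr, Set.inter_comm]

lemma regression_stratum_ratio_eq (hA : Measurable A) (hD : Measurable D)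
    (hX : Measurable X) (hcons : ∀ᵐ ω ∂P, D ω = false → Y ω = Y0 ω)
    (hCIS : ∀ x, 0 < pr P ({ω | X ω = x} ∩ {ω | S ω = true}) → ∀ a' d, CondIndepOn P
      {ω | Y0 ω = false} ({ω | A ω = a'} ∩ {ω | D ω = d}) ({ω | X ω = x} ∩ {ω | S ω = true}))
    (hposDS : ∀ x, 0 < pr P {ω | S ω = true ∧ X ω = x} →
      0 < pr P {ω | D ω = false ∧ S ω = true ∧ X ω = x}) (a : 𝒜) :
    (∑' x : 𝒳,
        cpr P {ω | Y ω = false} {ω | D ω = false ∧ S ω = true ∧ X ω = x} *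
          pr P {ω | A ω = a ∧ S ω = true ∧ X ω = x}) /
      (∑' x : 𝒳,
        cpr P {ω | Y ω = false} {ω | D ω = false ∧ S ω = true ∧ X ω = x} *
          pr P {ω | S ω = true ∧ X ω = x}) =
      cpr P {ω | A ω = a} ({ω | Y0 ω = false} ∩ {ω | S ω = true}) := by
  have hCI (x : 𝒳) : 0 < pr P ({ω | S ω = true} ∩ {ω | X ω = x}) → ∀ a' d,
      CondIndepOn P {ω | Y0 ω = false} ({ω | A ω = a'} ∩ {ω | D ω = d})
        ({ω | S ω = true} ∩ {ω | X ω = x}) := by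
    rw [Set.inter_comm]; exact hCIS x
  rw [cpr, Set.inter_left_comm, ← Set.inter_assoc]
  congr 1
  · exact (tsum_congr fun x =>
      cpr_outcome_untreated_mul_pr_group hA hD hcons (hCI x) (hposDS x) a).trans
      (tsum_pr_inter_inter_fiber hX _ _)
  · exact (tsum_congr fun x => cpr_outcome_untreated_mul_pr hA hcons (hCI x) (hposDS x)).trans
      (tsum_pr_inter_inter_fiber hX _ _)

lemma regression_ratio_eq (hA : Measurable A) (hD : Measurable D)
    (hX : Measurable X) (hcons : ∀ᵐ ω ∂P, D ω = false → Y ω = Y0 ω)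
    (hCIX : ∀ x, 0 < pr P {ω | X ω = x} → ∀ a' d, CondIndepOn P
      {ω | Y0 ω = false} ({ω | A ω = a'} ∩ {ω | D ω = d}) {ω | X ω = x})
    (hposDX : ∀ x, 0 < pr P {ω | X ω = x} → 0 < pr P {ω | D ω = false ∧ X ω = x}) (a : 𝒜) :
    (∑' x : 𝒳,
        cpr P {ω | Y ω = false} {ω | D ω = false ∧ X ω = x} *
          cpr P {ω | A ω = a} {ω | X ω = x} * pr P {ω | X ω = x}) /
      (∑' x : 𝒳,
        cpr P {ω | Y ω = false} {ω | D ω = false ∧ X ω = x} * pr P {ω | X ω = x}) =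
      cpr P {ω | A ω = a} {ω | Y0 ω = false} := by
  simp only [mul_assoc, cpr_mul_pr]
  rw [cpr, Set.inter_comm]
  congr 1
  · exact (tsum_congr fun x =>
      cpr_outcome_untreated_mul_pr_group hA hD hcons (hCIX x) (hposDX x) a).trans
      (tsum_pr_inter_fiber hX _)
  · exact (tsum_congr fun x =>
      cpr_outcome_untreated_mul_pr hA hcons (hCIX x) (hposDX x)).trans
      (tsum_pr_inter_fiber hX _)

end

theorem stmt_16_general
    {Ω 𝒜 𝒳 : Type*} [MeasurableSpace Ω]
    [MeasurableSpace 𝒜] [MeasurableSingletonClass 𝒜] [Countable 𝒜]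
    [MeasurableSpace 𝒳] [MeasurableSingletonClass 𝒳] [Countable 𝒳]
    (P : Measure Ω) [IsProbabilityMeasure P]
    (Y0 Y D S : Ω → Bool) (A : Ω → 𝒜) (X : Ω → 𝒳)
    (hD : Measurable D) (hS : Measurable S)
    (hA : Measurable A) (hX : Measurable X)
    (a : 𝒜)
    (hcons : ∀ᵐ ω ∂P, D ω = false → Y ω = Y0 ω)
    (hig : ∀ (a' : 𝒜) (x : 𝒳) (s y d : Bool),
      0 < pr P {ω | A ω = a' ∧ X ω = x ∧ S ω = s} →
      cpr P {ω | Y0 ω = y ∧ D ω = d} {ω | A ω = a' ∧ X ω = x ∧ S ω = s} =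
        cpr P {ω | Y0 ω = y} {ω | A ω = a' ∧ X ω = x ∧ S ω = s} *
          cpr P {ω | D ω = d} {ω | A ω = a' ∧ X ω = x ∧ S ω = s})
    (hposD : ∀ (a' : 𝒜) (x : 𝒳) (s : Bool),
      0 < pr P {ω | A ω = a' ∧ X ω = x ∧ S ω = s} →
      0 < pr P {ω | D ω = false ∧ A ω = a' ∧ X ω = x ∧ S ω = s})
    (hCIS : ∀ (y d : Bool) (a' : 𝒜) (x : 𝒳) (s : Bool),
      0 < pr P {ω | X ω = x ∧ S ω = s} →
      cpr P {ω | Y0 ω = y ∧ A ω = a' ∧ D ω = d} {ω | X ω = x ∧ S ω = s} =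
        cpr P {ω | Y0 ω = y} {ω | X ω = x ∧ S ω = s} *
          cpr P {ω | A ω = a' ∧ D ω = d} {ω | X ω = x ∧ S ω = s})
    (hCIX : ∀ (y d : Bool) (a' : 𝒜) (x : 𝒳), 0 < pr P {ω | X ω = x} →
      cpr P {ω | Y0 ω = y ∧ A ω = a' ∧ D ω = d} {ω | X ω = x} =
        cpr P {ω | Y0 ω = y} {ω | X ω = x} *
          cpr P {ω | A ω = a' ∧ D ω = d} {ω | X ω = x})
    (hposDS : ∀ (s : Bool) (x : 𝒳), 0 < pr P {ω | S ω = s ∧ X ω = x} →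
      0 < pr P {ω | D ω = false ∧ S ω = s ∧ X ω = x})
    (hposDX : ∀ x : 𝒳, 0 < pr P {ω | X ω = x} →
      0 < pr P {ω | D ω = false ∧ X ω = x}) :
    cpr P {ω | S ω = true} {ω | Y0 ω = false ∧ A ω = a} =
      ((∑' (a' : 𝒜) (x : 𝒳) (s : Bool),
          pr P {ω | D ω = false ∧ S ω = true ∧ Y ω = false ∧ A ω = a' ∧ X ω = x ∧ S ω = s} /
            (1 - cpr P {ω | D ω = true} {ω | A ω = a' ∧ X ω = x ∧ S ω = s})) /
        (∑' (a' : 𝒜) (x : 𝒳) (s : Bool),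
            pr P {ω | D ω = false ∧ Y ω = false ∧ A ω = a' ∧ X ω = x ∧ S ω = s} /
              (1 - cpr P {ω | D ω = true} {ω | A ω = a' ∧ X ω = x ∧ S ω = s}))) *
      ((∑' x : 𝒳,
          cpr P {ω | Y ω = false} {ω | D ω = false ∧ S ω = true ∧ X ω = x} *
            pr P {ω | A ω = a ∧ S ω = true ∧ X ω = x}) /
        (∑' x : 𝒳,
            cpr P {ω | Y ω = false} {ω | D ω = false ∧ S ω = true ∧ X ω = x} *
              pr P {ω | S ω = true ∧ X ω = x})) /
      ((∑' x : 𝒳,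
          cpr P {ω | Y ω = false} {ω | D ω = false ∧ X ω = x} *
            cpr P {ω | A ω = a} {ω | X ω = x} * pr P {ω | X ω = x}) /
        (∑' x : 𝒳,
            cpr P {ω | Y ω = false} {ω | D ω = false ∧ X ω = x} * pr P {ω | X ω = x})) := by
  rw [ipw_ratio_eq hA hX hS hD hcons (fun a' x s => hig a' x s false false) hposD,
    regression_stratum_ratio_eq hA hD hX hcons (fun x hx a' d => hCIS false d a' x true hx)
      (hposDS true) a,
    regression_ratio_eq hA hD hX hcons (fun x hx a' d => hCIX false d a' x hx) hposDX a]
  exact (cpr_mul_cpr_div_cpr _ _ _).symm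

/-- under consistency, ignorability, positivity, conditional independence of `Y⁰`
and `(A, D)` given `(X, S)` and given `X`, and positivity given `(X, S)` and given `X`, the
group-specific counterfactual false positive rate is fully identified from the observed data as
`P(S=1 | Y⁰=0, A=a) =
  (E[1{D=0}·1{S=1}·1{Y=0}/(1−π(A,X,S))] / E[1{D=0}·1{Y=0}/(1−π(A,X,S))]) ·
  (E[μ₀(0,1,X)·1{A=a}·1{S=1}] / E[μ₀(0,1,X)·1{S=1}]) /
  (E[μ₀*(0,X)·h(X,a)] / E[μ₀*(0,X)])`,
where `π(a,x,s) = P(D=1 | A=a, X=x, S=s)`, `μ₀(y,s,x) = P(Y=y | D=0, S=s, X=x)`,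
`μ₀*(y,x) = P(Y=y | D=0, X=x)`, `h(x,a) = P(A=a | X=x)`, and all expectations are the
corresponding series over the countable level sets (the indicator `1{S=1}` in the IPW numerator
is encoded by also requiring `S ω = true` in the event).
Binary variables are modelled as `Bool`-valued, with `1 = true` and `0 = false`. -/
theorem stmt_16
    {Ω 𝒜 𝒳 : Type*} [MeasurableSpace Ω]
    [MeasurableSpace 𝒜] [MeasurableSingletonClass 𝒜] [Countable 𝒜] [Nonempty 𝒜]
    [MeasurableSpace 𝒳] [MeasurableSingletonClass 𝒳] [Countable 𝒳] [Nonempty 𝒳]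
    (P : Measure Ω) [IsProbabilityMeasure P]
    (Y0 Y D S : Ω → Bool) (A : Ω → 𝒜) (X : Ω → 𝒳)
    (hY0 : Measurable Y0) (hY : Measurable Y) (hD : Measurable D) (hS : Measurable S)
    (hA : Measurable A) (hX : Measurable X)
    (a : 𝒜)
    (hpos1 : 0 < pr P {ω | Y0 ω = false ∧ A ω = a})
    (hpos2 : 0 < pr P {ω | Y0 ω = false ∧ S ω = true})
    (hcons : ∀ᵐ ω ∂P, D ω = false → Y ω = Y0 ω)
    (hig : ∀ (a' : 𝒜) (x : 𝒳) (s y d : Bool),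
      0 < pr P {ω | A ω = a' ∧ X ω = x ∧ S ω = s} →
      cpr P {ω | Y0 ω = y ∧ D ω = d} {ω | A ω = a' ∧ X ω = x ∧ S ω = s} =
        cpr P {ω | Y0 ω = y} {ω | A ω = a' ∧ X ω = x ∧ S ω = s} *
          cpr P {ω | D ω = d} {ω | A ω = a' ∧ X ω = x ∧ S ω = s})
    (hposD : ∀ (a' : 𝒜) (x : 𝒳) (s : Bool),
      0 < pr P {ω | A ω = a' ∧ X ω = x ∧ S ω = s} →
      0 < pr P {ω | D ω = false ∧ A ω = a' ∧ X ω = x ∧ S ω = s})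
    (hCIS : ∀ (y d : Bool) (a' : 𝒜) (x : 𝒳) (s : Bool),
      0 < pr P {ω | X ω = x ∧ S ω = s} →
      cpr P {ω | Y0 ω = y ∧ A ω = a' ∧ D ω = d} {ω | X ω = x ∧ S ω = s} =
        cpr P {ω | Y0 ω = y} {ω | X ω = x ∧ S ω = s} *
          cpr P {ω | A ω = a' ∧ D ω = d} {ω | X ω = x ∧ S ω = s})
    (hCIX : ∀ (y d : Bool) (a' : 𝒜) (x : 𝒳), 0 < pr P {ω | X ω = x} →
      cpr P {ω | Y0 ω = y ∧ A ω = a' ∧ D ω = d} {ω | X ω = x} =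
        cpr P {ω | Y0 ω = y} {ω | X ω = x} *
          cpr P {ω | A ω = a' ∧ D ω = d} {ω | X ω = x})
    (hposDS : ∀ (s : Bool) (x : 𝒳), 0 < pr P {ω | S ω = s ∧ X ω = x} →
      0 < pr P {ω | D ω = false ∧ S ω = s ∧ X ω = x})
    (hposDX : ∀ x : 𝒳, 0 < pr P {ω | X ω = x} →
      0 < pr P {ω | D ω = false ∧ X ω = x}) :
    cpr P {ω | S ω = true} {ω | Y0 ω = false ∧ A ω = a} =
      ((∑' (a' : 𝒜) (x : 𝒳) (s : Bool),
          pr P {ω | D ω = false ∧ S ω = true ∧ Y ω = false ∧ A ω = a' ∧ X ω = x ∧ S ω = s} /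
            (1 - cpr P {ω | D ω = true} {ω | A ω = a' ∧ X ω = x ∧ S ω = s})) /
        (∑' (a' : 𝒜) (x : 𝒳) (s : Bool),
            pr P {ω | D ω = false ∧ Y ω = false ∧ A ω = a' ∧ X ω = x ∧ S ω = s} /
              (1 - cpr P {ω | D ω = true} {ω | A ω = a' ∧ X ω = x ∧ S ω = s}))) *
      ((∑' x : 𝒳,
          cpr P {ω | Y ω = false} {ω | D ω = false ∧ S ω = true ∧ X ω = x} *
            pr P {ω | A ω = a ∧ S ω = true ∧ X ω = x}) /
        (∑' x : 𝒳,
            cpr P {ω | Y ω = false} {ω | D ω = false ∧ S ω = true ∧ X ω = x} *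
              pr P {ω | S ω = true ∧ X ω = x})) /
      ((∑' x : 𝒳,
          cpr P {ω | Y ω = false} {ω | D ω = false ∧ X ω = x} *
            cpr P {ω | A ω = a} {ω | X ω = x} * pr P {ω | X ω = x}) /
        (∑' x : 𝒳,
            cpr P {ω | Y ω = false} {ω | D ω = false ∧ X ω = x} * pr P {ω | X ω = x})) :=
  stmt_16_general P Y0 Y D S A X hD hS hA hX a hcons hig hposD hCIS hCIX hposDS hposDX
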